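/- arXiv:2008.07435 — 2 statements merged into one kernel-verified Lean document; each statement's English description precedes it below -/
import Mathlib

section
/- Let m ≥ 1, γ ≠ 0, and let n : ℝ^{n-1} → ℂ^{m×m} be a measurable matrix field satisfying, for a.e. ξ and a constant c > 0: |n(ξ)| ≤ c min{|ξ|², |ξ|^{−1}} and Re[n(ξ)a·conj(a)] ≥ c^{−1} min{|ξ|², |ξ|^{−1}}|a|² for all a ∈ ℂ^m. Let o₀ = diag(d₁,...,d_m) with all d_ℓ > 0, o₁ = diag(σ₁,...,σ_m) with all σ_ℓ > 0, o(ξ) = o₀ + 4π²|ξ|² o₁, and p(ξ) = n(ξ)* o(ξ) − 2πi γ ξ₁ I. Then there exists C > 0, depending only on c, γ, the d_ℓ and σ_ℓ, such that for a.e. ξ and all b ∈ ℂ^m: C^{−1} |p(ξ) b|² ≤ [(ξ₁² + |ξ|⁴) 𝟙_{|ξ|≤1}(ξ) + |ξ|² 𝟙_{|ξ|>1}(ξ)] |b|² ≤ C |p(ξ) b|². In particular p(ξ) is invertible for a.e. ξ ≠ 0. -/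
/-!
Write `p(ξ) = A* O − iθ` with `A = n(ξ)`, `O = o(ξ)` the positive diagonal matrix and
`θ = 2πγξ₁`. Pairing `p b` with `O b` kills `iθ`, because `⟪O b, b⟫` is real, so the coercivity
of `A` gives `min(|ξ|², |ξ|⁻¹) |O b| ≲ |p b|`; the triangle inequality gives
`|p b| ≤ |A| |O b| + |θ| |b|` and `|θ| |b| ≤ |p b| + |A| |O b|`. As `|O b|` is comparable to
`(1 + |ξ|²) |b|`, this yields `|p b| ≈ (|ξ|² + |ξ₁|) |b|` for `|ξ| ≤ 1` and `|p b| ≈ |ξ| |b|` for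
`|ξ| > 1`; squaring gives the weight, since `(|ξ|² + |ξ₁|)²` is comparable to `ξ₁² + |ξ|⁴`.
-/

open scoped ComplexConjugate

/-- The Euclidean norm on `ℂ^m`. -/
noncomputable def cvecNorm {m : ℕ} (b : Fin m → ℂ) : ℝ :=
  Real.sqrt (∑ i, ‖b i‖ ^ 2)

/-- The symbol `p(ξ) = N(ξ)* o(ξ) − 2πiγξ₁ I` with
`o(ξ) = diag(d₁,…,d_m) + 4π²|ξ|² diag(σ₁,…,σ_m)`. -/
noncomputable def surfSymb {m dd : ℕ} (hdd : 0 < dd) (γ : ℝ) (dvec σvec : Fin m → ℝ)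
    (N : EuclideanSpace ℝ (Fin dd) → Matrix (Fin m) (Fin m) ℂ)
    (ξ : EuclideanSpace ℝ (Fin dd)) : Matrix (Fin m) (Fin m) ℂ :=
  (N ξ).conjTranspose * Matrix.diagonal
      (fun ℓ => ((dvec ℓ : ℝ) : ℂ) + ((4 * Real.pi ^ 2 * ‖ξ‖ ^ 2 * σvec ℓ : ℝ) : ℂ))
    - (((2 * Real.pi * γ * ξ ⟨0, hdd⟩ : ℝ) : ℂ) * Complex.I) • 1

open scoped InnerProductSpace
open Matrix WithLp

lemma Finite.exists_pos_bounds {ι : Type*} [Finite ι] {f : ι → ℝ} (hf : ∀ i, 0 < f i) :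
    ∃ lo hi, 0 < lo ∧ 0 < hi ∧ ∀ i, lo ≤ f i ∧ f i ≤ hi := by
  rcases isEmpty_or_nonempty ι with hι | hι
  · exact ⟨1, 1, one_pos, one_pos, isEmptyElim⟩
  · obtain ⟨i, hi⟩ := Finite.exists_min f
    obtain ⟨j, hj⟩ := Finite.exists_max f
    exact ⟨f i, f j, hf i, hf j, fun k => ⟨hi k, hj k⟩⟩

lemma norm_ofReal_mul_I_smul {E : Type*} [SeminormedAddCommGroup E] [NormedSpace ℂ E]
    (θ : ℝ) (b : E) : ‖((θ : ℂ) * Complex.I) • b‖ = |θ| * ‖b‖ := by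
  simp [norm_smul]

namespace ContinuousLinearMap

variable {E : Type*} [NormedAddCommGroup E] [InnerProductSpace ℂ E] [CompleteSpace E]

noncomputable def adjointCompSubI (A O : E →L[ℂ] E) (θ : ℝ) : E →L[ℂ] E :=
  adjoint A * O - ((θ : ℂ) * Complex.I) • 1

variable {A O : E →L[ℂ] E} {θ K : ℝ}

lemma adjointCompSubI_apply (b : E) :
    adjointCompSubI A O θ b = adjoint A (O b) - ((θ : ℂ) * Complex.I) • b := rfl

lemma norm_adjoint_apply_le (hK : 0 ≤ K) (hA : ∀ x, ‖A x‖ ≤ K * ‖x‖) (y : E) :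
    ‖adjoint A y‖ ≤ K * ‖y‖ :=
  (adjoint A).le_of_opNorm_le
    (by rw [LinearIsometryEquiv.norm_map]; exact A.opNorm_le_bound hK hA) y

lemma norm_adjointCompSubI_apply_le (hK : 0 ≤ K) (hA : ∀ x, ‖A x‖ ≤ K * ‖x‖) (b : E) :
    ‖adjointCompSubI A O θ b‖ ≤ K * ‖O b‖ + |θ| * ‖b‖ := by
  rw [adjointCompSubI_apply, ← norm_ofReal_mul_I_smul θ b]
  exact (norm_sub_le _ _).trans (add_le_add_left (norm_adjoint_apply_le hK hA _) _)

lemma abs_mul_norm_le_adjointCompSubI (hK : 0 ≤ K) (hA : ∀ x, ‖A x‖ ≤ K * ‖x‖) (b : E) :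
    |θ| * ‖b‖ ≤ ‖adjointCompSubI A O θ b‖ + K * ‖O b‖ := by
  have h := norm_sub_le (adjoint A (O b)) (adjoint A (O b) - ((θ : ℂ) * Complex.I) • b)
  rw [sub_sub_cancel, norm_ofReal_mul_I_smul] at h
  rw [adjointCompSubI_apply]
  linarith [norm_adjoint_apply_le hK hA (O b)]

/-- Testing against `O b` kills the skew term `iθ`, since `⟪O b, b⟫` is real. -/
lemma mul_norm_le_adjointCompSubI {κ : ℝ} (hO : IsSelfAdjoint O)
    (hA : ∀ x, κ * ‖x‖ ^ 2 ≤ (⟪x, A x⟫_ℂ).re) (b : E) :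
    κ * ‖O b‖ ≤ ‖adjointCompSubI A O θ b‖ := by
  have hre : (⟪O b, adjointCompSubI A O θ b⟫_ℂ).re = (⟪O b, A (O b)⟫_ℂ).re := by
    have him := hO.isSymmetric.im_inner_apply_self b
    rw [adjointCompSubI_apply, inner_sub_right, adjoint_inner_right, inner_smul_right,
      Complex.sub_re, ← RCLike.re_to_complex, inner_re_symm]
    simp_all
  have key : κ * ‖O b‖ ^ 2 ≤ ‖O b‖ * ‖adjointCompSubI A O θ b‖ :=
    (hA (O b)).trans (hre.ge.trans ((Complex.re_le_norm _).trans (norm_inner_le_norm _ _)))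
  rcases (norm_nonneg (O b)).eq_or_lt with h0 | hpos
  · rw [← h0, mul_zero]; exact norm_nonneg _
  · nlinarith

end ContinuousLinearMap

section Diagonal

variable {ι : Type*} [Fintype ι] [DecidableEq ι] (w : ι → ℝ)

lemma isSelfAdjoint_toEuclideanCLM_diagonal_ofReal :
    IsSelfAdjoint (toEuclideanCLM (𝕜 := ℂ) (diagonal fun i => (w i : ℂ))) :=
  IsSelfAdjoint.map (by simp [IsSelfAdjoint, star_eq_conjTranspose, diagonal_conjTranspose]) _

lemma norm_toEuclideanCLM_diagonal_ofReal_sq (x : EuclideanSpace ℂ ι) :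
    ‖toEuclideanCLM (𝕜 := ℂ) (diagonal fun i => (w i : ℂ)) x‖ ^ 2 =
      ∑ i, w i ^ 2 * ‖x i‖ ^ 2 := by
  simp [EuclideanSpace.norm_sq_eq, mulVec_diagonal, mul_pow]

variable {w} {r : ℝ}

lemma norm_toEuclideanCLM_diagonal_ofReal_le (hr : 0 ≤ r) (hw : ∀ i, |w i| ≤ r)
    (x : EuclideanSpace ℂ ι) :
    ‖toEuclideanCLM (𝕜 := ℂ) (diagonal fun i => (w i : ℂ)) x‖ ≤ r * ‖x‖ := by
  refine le_of_sq_le_sq ?_ (by positivity)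
  rw [norm_toEuclideanCLM_diagonal_ofReal_sq, mul_pow, EuclideanSpace.norm_sq_eq, Finset.mul_sum]
  refine Finset.sum_le_sum fun i _ => mul_le_mul_of_nonneg_right ?_ (sq_nonneg _)
  exact sq_le_sq' (abs_le.1 (hw i)).1 (abs_le.1 (hw i)).2

lemma le_norm_toEuclideanCLM_diagonal_ofReal (hr : 0 ≤ r) (hw : ∀ i, r ≤ w i)
    (x : EuclideanSpace ℂ ι) :
    r * ‖x‖ ≤ ‖toEuclideanCLM (𝕜 := ℂ) (diagonal fun i => (w i : ℂ)) x‖ := by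
  refine le_of_sq_le_sq ?_ (norm_nonneg _)
  rw [norm_toEuclideanCLM_diagonal_ofReal_sq, mul_pow, EuclideanSpace.norm_sq_eq, Finset.mul_sum]
  gcongr with i
  exact hw i

end Diagonal

section ScalarBounds

variable {c a d s D S K X y β u p : ℝ}

lemma min_sq_inv_of_le_one (h0 : 0 ≤ X) (h1 : X ≤ 1) : min (X ^ 2) X⁻¹ = X ^ 2 := by
  rcases h0.eq_or_lt with rfl | hpos
  · simp
  · exact min_eq_left ((pow_le_one₀ h0 h1).trans ((one_le_inv₀ hpos).2 h1))

lemma min_sq_inv_of_one_lt (h1 : 1 < X) : min (X ^ 2) X⁻¹ = X⁻¹ :=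
  min_eq_right ((inv_lt_one_of_one_lt₀ h1).le.trans (one_le_pow₀ h1.le))

lemma comparable_of_le_one (hc : 0 < c) (ha : 0 < a) (hd : 0 < d) (hD : 0 ≤ D) (hS : 0 ≤ S)
    (hX0 : 0 ≤ X) (hX1 : X ≤ 1) (hy : 0 ≤ y) (hβ : 0 ≤ β)
    (hdu : d * β ≤ u) (huD : u ≤ (D + S * X ^ 2) * β)
    (hup : p ≤ c * X ^ 2 * u + a * y * β) (hrev : a * y * β ≤ p + c * X ^ 2 * u)
    (hlo : c⁻¹ * X ^ 2 * u ≤ p)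
    (hK₁ : c * (D + S) + a ≤ K) (hK₂ : c / d + (1 + c * (D + S) * (c / d)) / a ≤ K) :
    p ≤ K * ((X ^ 2 + y) * β) ∧ (X ^ 2 + y) * β ≤ K * p := by
  have hu : c * X ^ 2 * u ≤ c * (D + S) * (X ^ 2 * β) := by
    have : (D + S * X ^ 2) * β ≤ (D + S) * β := by
      gcongr; nlinarith [pow_le_one₀ hX0 hX1 (n := 2)]
    nlinarith [mul_le_mul_of_nonneg_left (huD.trans this) (by positivity : 0 ≤ c * X ^ 2)]
  have hX2 : X ^ 2 * β ≤ c / d * p := by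
    rw [div_mul_eq_mul_div, le_div_iff₀ hd]
    have := mul_le_mul_of_nonneg_left hdu (by positivity : 0 ≤ c⁻¹ * X ^ 2)
    field_simp at this hlo
    nlinarith
  have hyβ : y * β ≤ (1 + c * (D + S) * (c / d)) / a * p := by
    rw [div_mul_eq_mul_div, le_div_iff₀ ha]
    nlinarith [mul_le_mul_of_nonneg_left hX2 (by positivity : 0 ≤ c * (D + S))]
  have hu0 : 0 ≤ u := (mul_nonneg hd.le hβ).trans hdu
  have hp : 0 ≤ p := le_trans (by positivity) hlo
  constructor
  · refine le_trans ?_ (mul_le_mul_of_nonneg_right hK₁ (by positivity))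
    nlinarith [mul_nonneg (mul_nonneg hc.le (add_nonneg hD hS)) (mul_nonneg hy hβ),
      mul_nonneg ha.le (mul_nonneg (sq_nonneg X) hβ)]
  · nlinarith [mul_le_mul_of_nonneg_right hK₂ hp]

lemma comparable_of_one_lt (hc : 0 < c) (ha : 0 < a) (hs : 0 < s) (hD : 0 ≤ D)
    (hX1 : 1 < X) (hyX : y ≤ X) (hβ : 0 ≤ β)
    (hsu : s * X ^ 2 * β ≤ u) (huD : u ≤ (D + S * X ^ 2) * β)
    (hup : p ≤ c * X⁻¹ * u + a * y * β) (hlo : c⁻¹ * X⁻¹ * u ≤ p)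
    (hK₁ : c * (D + S) + a ≤ K) (hK₂ : c / s ≤ K) :
    p ≤ K * (X * β) ∧ X * β ≤ K * p := by
  have hX0 : 0 < X := one_pos.trans hX1
  have hu : X⁻¹ * u ≤ (D + S) * (X * β) := by
    rw [inv_mul_le_iff₀ hX0]
    nlinarith [mul_nonneg hD hβ, mul_nonneg (mul_nonneg hD hβ) (sub_nonneg.2 hX1.le)]
  have hXβ : X * β ≤ c / s * p := by
    rw [div_mul_eq_mul_div, le_div_iff₀ hs]
    have := mul_le_mul_of_nonneg_left hsu (by positivity : 0 ≤ c⁻¹ * X⁻¹)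
    field_simp at this hlo
    nlinarith
  have hp : 0 ≤ p :=
    nonneg_of_mul_nonneg_right ((by positivity : 0 ≤ X * β).trans hXβ) (by positivity)
  constructor
  · refine le_trans ?_ (mul_le_mul_of_nonneg_right hK₁ (by positivity))
    nlinarith [mul_le_mul_of_nonneg_left hu hc.le,
      mul_le_mul_of_nonneg_right hyX (mul_nonneg ha.le hβ)]
  · nlinarith [mul_le_mul_of_nonneg_right hK₂ hp]

lemma two_sided_sq_of_comparable {W ρ : ℝ} (hK : 0 < K) (hβ : 0 ≤ β) (hρ : 0 ≤ ρ)
    (hWρ : W ≤ ρ ^ 2) (hρW : ρ ^ 2 ≤ 2 * W) (hup : p ≤ K * (ρ * β)) (hlo : ρ * β ≤ K * p) :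
    (2 * K ^ 2)⁻¹ * p ^ 2 ≤ W * β ^ 2 ∧ W * β ^ 2 ≤ 2 * K ^ 2 * p ^ 2 := by
  have hp : 0 ≤ p := nonneg_of_mul_nonneg_right ((mul_nonneg hρ hβ).trans hlo) hK
  have hup2 : p ^ 2 ≤ K ^ 2 * (ρ ^ 2 * β ^ 2) := by
    simpa [mul_pow] using pow_le_pow_left₀ hp hup 2
  have hlo2 : ρ ^ 2 * β ^ 2 ≤ K ^ 2 * p ^ 2 := by
    simpa [mul_pow] using pow_le_pow_left₀ (mul_nonneg hρ hβ) hlo 2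
  constructor
  · rw [inv_mul_le_iff₀ (by positivity)]
    nlinarith [mul_le_mul_of_nonneg_right hρW (sq_nonneg β), sq_nonneg K]
  · nlinarith [mul_le_mul_of_nonneg_right hWρ (sq_nonneg β), sq_nonneg K, sq_nonneg p]

end ScalarBounds

lemma cvecNorm_nonneg {m : ℕ} (b : Fin m → ℂ) : 0 ≤ cvecNorm b := Real.sqrt_nonneg _

lemma cvecNorm_eq_norm_toLp {m : ℕ} (b : Fin m → ℂ) : cvecNorm b = ‖toLp 2 b‖ := by
  rw [EuclideanSpace.norm_eq]; rfl

lemma sum_mul_conj_eq_inner {m : ℕ} (a v : Fin m → ℂ) :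
    ∑ i, v i * conj (a i) = ⟪toLp 2 a, toLp 2 v⟫_ℂ := rfl

lemma Matrix.isUnit_of_mulVec_eq_zero {n K : Type*} [Fintype n] [DecidableEq n] [Field K]
    {A : Matrix n n K} (h : ∀ v, A *ᵥ v = 0 → v = 0) : IsUnit A :=
  mulVec_injective_iff_isUnit.1 ((injective_iff_map_eq_zero (mulVecLin A)).2 h)

lemma isUnit_of_mul_cvecNorm_sq_le {m : ℕ} {A : Matrix (Fin m) (Fin m) ℂ} {W C : ℝ}
    (hW : 0 < W) (h : ∀ b, W * cvecNorm b ^ 2 ≤ C * cvecNorm (A *ᵥ b) ^ 2) : IsUnit A :=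
  Matrix.isUnit_of_mulVec_eq_zero fun v hv => by
    have h0 := h v
    rw [hv, cvecNorm_eq_norm_toLp, cvecNorm_eq_norm_toLp, WithLp.toLp_zero, norm_zero,
      zero_pow two_ne_zero, mul_zero] at h0
    have : ‖toLp 2 v‖ ^ 2 ≤ 0 := by nlinarith
    simpa using this

section SurfaceSymbol

variable {m dd : ℕ} {dvec σvec : Fin m → ℝ}

/-- The diagonal entries of `o(ξ)` in `surfSymb`. -/
noncomputable def surfDiag (dvec σvec : Fin m → ℝ) (ξ : EuclideanSpace ℝ (Fin dd)) (ℓ : Fin m) :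
    ℝ :=
  dvec ℓ + 4 * Real.pi ^ 2 * ‖ξ‖ ^ 2 * σvec ℓ

lemma toEuclideanCLM_surfSymb (hdd : 0 < dd) (γ : ℝ)
    (N : EuclideanSpace ℝ (Fin dd) → Matrix (Fin m) (Fin m) ℂ) (ξ : EuclideanSpace ℝ (Fin dd)) :
    toEuclideanCLM (𝕜 := ℂ) (surfSymb hdd γ dvec σvec N ξ) =
      (toEuclideanCLM (𝕜 := ℂ) (N ξ)).adjointCompSubI
        (toEuclideanCLM (𝕜 := ℂ) (diagonal fun ℓ => (surfDiag dvec σvec ξ ℓ : ℂ)))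
        (2 * Real.pi * γ * ξ ⟨0, hdd⟩) := by
  simp only [surfSymb, surfDiag, ContinuousLinearMap.adjointCompSubI, map_sub, map_mul, map_smul,
    map_one, ← star_eq_conjTranspose, map_star, ContinuousLinearMap.star_eq_adjoint,
    Complex.ofReal_add]

lemma cvecNorm_surfDiag_bounds {d s D S : ℝ} (hd : 0 ≤ d) (hs : 0 ≤ s) (hD : 0 ≤ D) (hS : 0 ≤ S)
    (hdvec : ∀ ℓ, d ≤ dvec ℓ ∧ dvec ℓ ≤ D) (hσvec : ∀ ℓ, s ≤ σvec ℓ ∧ σvec ℓ ≤ S)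
    (ξ : EuclideanSpace ℝ (Fin dd)) (b : Fin m → ℂ) :
    d * cvecNorm b ≤ cvecNorm (diagonal (fun ℓ => (surfDiag dvec σvec ξ ℓ : ℂ)) *ᵥ b) ∧
      4 * Real.pi ^ 2 * s * ‖ξ‖ ^ 2 * cvecNorm b ≤
        cvecNorm (diagonal (fun ℓ => (surfDiag dvec σvec ξ ℓ : ℂ)) *ᵥ b) ∧
      cvecNorm (diagonal (fun ℓ => (surfDiag dvec σvec ξ ℓ : ℂ)) *ᵥ b) ≤
        (D + 4 * Real.pi ^ 2 * S * ‖ξ‖ ^ 2) * cvecNorm b := by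
  have hσ : ∀ ℓ, 0 ≤ 4 * Real.pi ^ 2 * ‖ξ‖ ^ 2 * σvec ℓ := fun ℓ =>
    mul_nonneg (by positivity) (hs.trans (hσvec ℓ).1)
  simp only [cvecNorm_eq_norm_toLp, ← toEuclideanCLM_toLp]
  refine ⟨le_norm_toEuclideanCLM_diagonal_ofReal hd (fun ℓ => ?_) _,
    le_norm_toEuclideanCLM_diagonal_ofReal (by positivity) (fun ℓ => ?_) _,
    norm_toEuclideanCLM_diagonal_ofReal_le (by positivity) (fun ℓ => ?_) _⟩
  · exact (hdvec ℓ).1.trans (le_add_of_nonneg_right (hσ ℓ))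
  · have := mul_le_mul_of_nonneg_left (hσvec ℓ).1 (by positivity : 0 ≤ 4 * Real.pi ^ 2 * ‖ξ‖ ^ 2)
    unfold surfDiag
    linarith [hd.trans (hdvec ℓ).1]
  · have := mul_le_mul_of_nonneg_left (hσvec ℓ).2 (by positivity : 0 ≤ 4 * Real.pi ^ 2 * ‖ξ‖ ^ 2)
    unfold surfDiag
    rw [abs_of_nonneg (add_nonneg (hd.trans (hdvec ℓ).1) (hσ ℓ))]
    linarith [(hdvec ℓ).2]

lemma surfSymb_estimates (hdd : 0 < dd) {γ c : ℝ}
    {N : EuclideanSpace ℝ (Fin dd) → Matrix (Fin m) (Fin m) ℂ} {ξ : EuclideanSpace ℝ (Fin dd)}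
    (hc : 0 < c)
    (hN : ∀ b, cvecNorm (N ξ *ᵥ b) ≤ c * min (‖ξ‖ ^ 2) ‖ξ‖⁻¹ * cvecNorm b)
    (hNre : ∀ a, c⁻¹ * min (‖ξ‖ ^ 2) ‖ξ‖⁻¹ * cvecNorm a ^ 2 ≤
      (∑ i, (N ξ *ᵥ a) i * conj (a i)).re)
    (b : Fin m → ℂ) :
    cvecNorm (surfSymb hdd γ dvec σvec N ξ *ᵥ b) ≤
        c * min (‖ξ‖ ^ 2) ‖ξ‖⁻¹ *
            cvecNorm (diagonal (fun ℓ => (surfDiag dvec σvec ξ ℓ : ℂ)) *ᵥ b) +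
          2 * Real.pi * |γ| * |ξ ⟨0, hdd⟩| * cvecNorm b ∧
      2 * Real.pi * |γ| * |ξ ⟨0, hdd⟩| * cvecNorm b ≤
        cvecNorm (surfSymb hdd γ dvec σvec N ξ *ᵥ b) +
          c * min (‖ξ‖ ^ 2) ‖ξ‖⁻¹ *
            cvecNorm (diagonal (fun ℓ => (surfDiag dvec σvec ξ ℓ : ℂ)) *ᵥ b) ∧
      c⁻¹ * min (‖ξ‖ ^ 2) ‖ξ‖⁻¹ *
          cvecNorm (diagonal (fun ℓ => (surfDiag dvec σvec ξ ℓ : ℂ)) *ᵥ b) ≤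
        cvecNorm (surfSymb hdd γ dvec σvec N ξ *ᵥ b) := by
  have hM : 0 ≤ c * min (‖ξ‖ ^ 2) ‖ξ‖⁻¹ := by positivity
  have hA : ∀ x, ‖toEuclideanCLM (𝕜 := ℂ) (N ξ) x‖ ≤ c * min (‖ξ‖ ^ 2) ‖ξ‖⁻¹ * ‖x‖ := fun x => by
    simpa only [cvecNorm_eq_norm_toLp, ← toEuclideanCLM_toLp, toLp_ofLp] using hN (ofLp x)
  have hAre : ∀ x, c⁻¹ * min (‖ξ‖ ^ 2) ‖ξ‖⁻¹ * ‖x‖ ^ 2 ≤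
      (⟪x, toEuclideanCLM (𝕜 := ℂ) (N ξ) x⟫_ℂ).re := fun x => by
    simpa only [cvecNorm_eq_norm_toLp, sum_mul_conj_eq_inner, ← toEuclideanCLM_toLp, toLp_ofLp]
      using hNre (ofLp x)
  have hθ : |2 * Real.pi * γ * ξ ⟨0, hdd⟩| = 2 * Real.pi * |γ| * |ξ ⟨0, hdd⟩| := by
    simp [abs_mul, abs_of_pos Real.pi_pos]
  simp only [cvecNorm_eq_norm_toLp, ← toEuclideanCLM_toLp, toEuclideanCLM_surfSymb, ← hθ]
  exact ⟨ContinuousLinearMap.norm_adjointCompSubI_apply_le hM hA _,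
    ContinuousLinearMap.abs_mul_norm_le_adjointCompSubI hM hA _,
    ContinuousLinearMap.mul_norm_le_adjointCompSubI
      (isSelfAdjoint_toEuclideanCLM_diagonal_ofReal _) hAre _⟩

end SurfaceSymbol

lemma exists_surfSymb_two_sided {m dd : ℕ} (hdd : 0 < dd) {γ c d s D S : ℝ}
    {dvec σvec : Fin m → ℝ} (hc : 0 < c) (hγ : γ ≠ 0)
    (hd : 0 < d) (hs : 0 < s) (hD : 0 ≤ D) (hS : 0 ≤ S)
    (hdvec : ∀ ℓ, d ≤ dvec ℓ ∧ dvec ℓ ≤ D) (hσvec : ∀ ℓ, s ≤ σvec ℓ ∧ σvec ℓ ≤ S) :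
    ∃ C : ℝ, 0 < C ∧
      ∀ (N : EuclideanSpace ℝ (Fin dd) → Matrix (Fin m) (Fin m) ℂ)
        (ξ : EuclideanSpace ℝ (Fin dd)),
        (∀ b : Fin m → ℂ,
          cvecNorm ((N ξ).mulVec b) ≤ c * min (‖ξ‖ ^ 2) ‖ξ‖⁻¹ * cvecNorm b) →
        (∀ a : Fin m → ℂ,
          c⁻¹ * min (‖ξ‖ ^ 2) ‖ξ‖⁻¹ * cvecNorm a ^ 2 ≤
            (∑ i, (N ξ).mulVec a i * conj (a i)).re) →
        ∀ b : Fin m → ℂ,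
          C⁻¹ * cvecNorm ((surfSymb hdd γ dvec σvec N ξ).mulVec b) ^ 2 ≤
              (if ‖ξ‖ ≤ 1 then (ξ ⟨0, hdd⟩) ^ 2 + ‖ξ‖ ^ 4 else ‖ξ‖ ^ 2) * cvecNorm b ^ 2 ∧
            (if ‖ξ‖ ≤ 1 then (ξ ⟨0, hdd⟩) ^ 2 + ‖ξ‖ ^ 4 else ‖ξ‖ ^ 2) * cvecNorm b ^ 2 ≤
              C * cvecNorm ((surfSymb hdd γ dvec σvec N ξ).mulVec b) ^ 2 := by
  set a := 2 * Real.pi * |γ|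
  set H := c * (D + 4 * Real.pi ^ 2 * S)
  set K := H + a + (c / d + (1 + H * (c / d)) / a) + c / (4 * Real.pi ^ 2 * s)
  have ha : 0 < a := by positivity
  have hK : 0 < K := by positivity
  have hK₁ : H + a ≤ K :=
    (le_add_of_nonneg_right (by positivity)).trans (le_add_of_nonneg_right (by positivity))
  have hK₂ : c / d + (1 + H * (c / d)) / a ≤ K :=
    (le_add_of_nonneg_left (by positivity)).trans (le_add_of_nonneg_right (by positivity))
  have hK₃ : c / (4 * Real.pi ^ 2 * s) ≤ K := le_add_of_nonneg_left (by positivity)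
  refine ⟨2 * K ^ 2, by positivity, fun N ξ hN hNre b => ?_⟩
  obtain ⟨hup, hrev, hlo⟩ := surfSymb_estimates hdd hc hN hNre b
  obtain ⟨hdu, hsu, huD⟩ := cvecNorm_surfDiag_bounds hd.le hs.le hD hS hdvec hσvec ξ b
  have hy : |ξ ⟨0, hdd⟩| ≤ ‖ξ‖ := by simpa using PiLp.norm_apply_le ξ ⟨0, hdd⟩
  rcases le_or_gt ‖ξ‖ 1 with h1 | h1
  · rw [min_sq_inv_of_le_one (norm_nonneg _) h1] at hup hrev hlo
    obtain ⟨hup', hlo'⟩ := comparable_of_le_one hc ha hd hD (by positivity)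
      (norm_nonneg _) h1 (abs_nonneg _) (cvecNorm_nonneg b) hdu huD hup hrev hlo hK₁ hK₂
    rw [if_pos h1, ← sq_abs (ξ _)]
    exact two_sided_sq_of_comparable hK (cvecNorm_nonneg b) (by positivity)
      (by nlinarith [abs_nonneg (ξ ⟨0, hdd⟩), norm_nonneg ξ])
      (by nlinarith [sq_nonneg (‖ξ‖ ^ 2 - |ξ ⟨0, hdd⟩|)]) hup' hlo'
  · rw [min_sq_inv_of_one_lt h1] at hup hlo
    obtain ⟨hup', hlo'⟩ := comparable_of_one_lt hc ha (by positivity) hD h1 hy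
      (cvecNorm_nonneg b) hsu huD hup hlo hK₁ hK₃
    rw [if_neg (not_le.2 h1)]
    exact two_sided_sq_of_comparable hK (cvecNorm_nonneg b) (by positivity) le_rfl
      (by nlinarith [sq_nonneg ‖ξ‖]) hup' hlo'

theorem stmt_12_general (m dd : ℕ) (hdd : 0 < dd) (γ c : ℝ) (hγ : γ ≠ 0)
    (hc : 0 < c) (dvec σvec : Fin m → ℝ) (hd : ∀ ℓ, 0 < dvec ℓ) (hσ : ∀ ℓ, 0 < σvec ℓ) :
    ∃ C : ℝ, 0 < C ∧
      ∀ (N : EuclideanSpace ℝ (Fin dd) → Matrix (Fin m) (Fin m) ℂ)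
        (ξ : EuclideanSpace ℝ (Fin dd)),
        (∀ b : Fin m → ℂ,
          cvecNorm ((N ξ).mulVec b) ≤ c * min (‖ξ‖ ^ 2) ‖ξ‖⁻¹ * cvecNorm b) →
        (∀ a : Fin m → ℂ,
          c⁻¹ * min (‖ξ‖ ^ 2) ‖ξ‖⁻¹ * cvecNorm a ^ 2 ≤
            (∑ i, (N ξ).mulVec a i * conj (a i)).re) →
        (∀ b : Fin m → ℂ,
          C⁻¹ * cvecNorm ((surfSymb hdd γ dvec σvec N ξ).mulVec b) ^ 2 ≤
              (if ‖ξ‖ ≤ 1 then (ξ ⟨0, hdd⟩) ^ 2 + ‖ξ‖ ^ 4 else ‖ξ‖ ^ 2) * cvecNorm b ^ 2 ∧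
            (if ‖ξ‖ ≤ 1 then (ξ ⟨0, hdd⟩) ^ 2 + ‖ξ‖ ^ 4 else ‖ξ‖ ^ 2) * cvecNorm b ^ 2 ≤
              C * cvecNorm ((surfSymb hdd γ dvec σvec N ξ).mulVec b) ^ 2) ∧
          (ξ ≠ 0 → IsUnit (surfSymb hdd γ dvec σvec N ξ)) := by
  obtain ⟨d, D, hd₀, hD₀, hdvec⟩ := Finite.exists_pos_bounds hd
  obtain ⟨s, S, hs₀, hS₀, hσvec⟩ := Finite.exists_pos_bounds hσ
  obtain ⟨C, hC, hbound⟩ :=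
    exists_surfSymb_two_sided hdd hc hγ hd₀ hs₀ hD₀.le hS₀.le hdvec hσvec
  refine ⟨C, hC, fun N ξ hN hNre => ⟨hbound N ξ hN hNre, fun hξ => ?_⟩⟩
  have hξ₀ : 0 < ‖ξ‖ := norm_pos_iff.2 hξ
  have hweight : 0 < if ‖ξ‖ ≤ 1 then (ξ ⟨0, hdd⟩) ^ 2 + ‖ξ‖ ^ 4 else ‖ξ‖ ^ 2 := by
    split_ifs <;> positivity
  exact isUnit_of_mul_cvecNorm_sq_le hweight fun b => (hbound N ξ hN hNre b).2

/-- Two-sided estimate for the symbol `p(ξ) = n(ξ)* o(ξ) − 2πiγξ₁I`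
built from a symbol field `n` satisfying the normal-stress-to-normal-Dirichlet bounds,
strictly positive `d_ℓ` (gravity terms) and strictly positive surface tensions `σ_ℓ`:
`C⁻¹|p(ξ)b|² ≤ [(ξ₁²+|ξ|⁴)𝟙_{|ξ|≤1} + |ξ|²𝟙_{|ξ|>1}]|b|² ≤ C|p(ξ)b|²`, and in
particular `p(ξ)` is invertible for `ξ ≠ 0`. -/
theorem stmt_12 (m dd : ℕ) (hm : 1 ≤ m) (hdd : 0 < dd) (γ c : ℝ) (hγ : γ ≠ 0)
    (hc : 0 < c) (dvec σvec : Fin m → ℝ) (hd : ∀ ℓ, 0 < dvec ℓ) (hσ : ∀ ℓ, 0 < σvec ℓ) :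
    ∃ C : ℝ, 0 < C ∧
      ∀ (N : EuclideanSpace ℝ (Fin dd) → Matrix (Fin m) (Fin m) ℂ)
        (ξ : EuclideanSpace ℝ (Fin dd)),
        (∀ b : Fin m → ℂ,
          cvecNorm ((N ξ).mulVec b) ≤ c * min (‖ξ‖ ^ 2) ‖ξ‖⁻¹ * cvecNorm b) →
        (∀ a : Fin m → ℂ,
          c⁻¹ * min (‖ξ‖ ^ 2) ‖ξ‖⁻¹ * cvecNorm a ^ 2 ≤
            (∑ i, (N ξ).mulVec a i * conj (a i)).re) →
        (∀ b : Fin m → ℂ,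
          C⁻¹ * cvecNorm ((surfSymb hdd γ dvec σvec N ξ).mulVec b) ^ 2 ≤
              (if ‖ξ‖ ≤ 1 then (ξ ⟨0, hdd⟩) ^ 2 + ‖ξ‖ ^ 4 else ‖ξ‖ ^ 2) * cvecNorm b ^ 2 ∧
            (if ‖ξ‖ ≤ 1 then (ξ ⟨0, hdd⟩) ^ 2 + ‖ξ‖ ^ 4 else ‖ξ‖ ^ 2) * cvecNorm b ^ 2 ≤
              C * cvecNorm ((surfSymb hdd γ dvec σvec N ξ).mulVec b) ^ 2) ∧
          (ξ ≠ 0 → IsUnit (surfSymb hdd γ dvec σvec N ξ)) :=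
  stmt_12_general m dd hdd γ c hγ hc dvec σvec hd hσ
end

section
/- Let 0 < a₁ < ... < a_m with a₀ = 0, set Ω_ℓ = ℝ^{n-1} × (a_{ℓ-1}, a_ℓ), Ω = ∪Ω_ℓ, Σ_ℓ = ℝ^{n-1} × {a_ℓ}. Let u ∈ H¹(ℝ^{n-1} × (0,a_m); ℝⁿ) with vanishing trace on ℝ^{n-1}×{0}, and let η₁,...,η_m be C¹ functions satisfying the uniform separation condition max ‖η_ℓ‖_{C⁰} ≤ (1/2)min{a₁,...,a_m−a_{m-1}} and with J, 𝒜 the layerwise Jacobian and geometry matrix built from them. Then for each ℓ ∈ {1,...,m}: ∫₀^{a_ℓ} (J 𝒜∇)·u dy = u·𝒩_ℓ(·, a_ℓ) + ∇_∥ · ∫₀^{a_ℓ} J 𝒜ᵀ u dy, where 𝒩_ℓ = (−∇η_ℓ, 1) and (𝒜∇)·u denotes the 𝒜-divergence ∑_{i,j} 𝒜_{ij} ∂_j (u·e_i). -/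
open MeasureTheory
open scoped RealInnerProductSpace

variable {d : ℕ}

/-- The flattened divergence `J (𝒜∇)·u` of a vector field `u` on `ℝ^{n-1} × ℝ`
(horizontal component in `ℝ^{n-1}`, vertical component scalar), where `J` is the
layerwise Jacobian, `Bv` the layerwise vector `(a_ℓ−y)∇η_{ℓ-1} + (y−a_{ℓ-1})∇η_ℓ`,
`δf` the layerwise quantity `a_ℓ+η_ℓ−a_{ℓ-1}−η_{ℓ-1}`, and `Δf` the layerwise width
`a_ℓ − a_{ℓ-1}`. -/
noncomputable def flatDiv (u : EuclideanSpace ℝ (Fin d) × ℝ → EuclideanSpace ℝ (Fin d) × ℝ)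
    (J δf : EuclideanSpace ℝ (Fin d) × ℝ → ℝ) (Δf : ℝ → ℝ)
    (Bv : EuclideanSpace ℝ (Fin d) × ℝ → EuclideanSpace ℝ (Fin d))
    (p : EuclideanSpace ℝ (Fin d) × ℝ) : ℝ :=
  J p * ((∑ i, (fderiv ℝ (fun q => (u q).1 i) p
        ((EuclideanSpace.single i 1 : EuclideanSpace ℝ (Fin d)), (0 : ℝ))
      - (Bv p i / δf p) * fderiv ℝ (fun q => (u q).1 i) p
        ((0 : EuclideanSpace ℝ (Fin d)), (1 : ℝ))))
    + (Δf p.2 / δf p) * fderiv ℝ (fun q => (u q).2) p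
        ((0 : EuclideanSpace ℝ (Fin d)), (1 : ℝ)))

/-!
On the layer between heights `c₁ < c₂` the flattened divergence splits pointwise as
`∂_y φ + ∑ᵢ ∂_{xᵢ} (J uᵢ)`, where the potential `φ(y)` interpolates linearly in `y` between
the normal fluxes `u · 𝒩` through the lower and the upper interface. Integrating over the layer,
the fundamental theorem of calculus produces the difference of the two normal fluxes, and
differentiation under the integral sign produces the horizontal divergence of `∫ J u_h`.
Summing over the layers below `a_ℓ` telescopes, and the flux through the bottom vanishes
because `u(·, 0) = 0`.
-/

open Set

section Calculus

variable {E G : Type*} [NormedAddCommGroup E] [NormedSpace ℝ E]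
  [NormedAddCommGroup G] [NormedSpace ℝ G]

theorem hasDerivAt_comp_prodMk_right {f : E × ℝ → G} {x : E} {y : ℝ}
    (hf : DifferentiableAt ℝ f (x, y)) :
    HasDerivAt (fun t => f (x, t)) (fderiv ℝ f (x, y) (0, 1)) y :=
  hf.hasFDerivAt.comp_hasDerivAt y ((hasDerivAt_const y x).prodMk (hasDerivAt_id y))

theorem fderiv_comp_fst_mul_apply_inl {J : E → ℝ} {f : E × ℝ → ℝ} {p : E × ℝ}
    (hJ : DifferentiableAt ℝ J p.1) (hf : DifferentiableAt ℝ f p) (v : E) :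
    fderiv ℝ (fun q => J q.1 * f q) p (v, 0)
      = J p.1 * fderiv ℝ f p (v, 0) + f p * fderiv ℝ J p.1 v := by
  have h : HasFDerivAt (fun q => J q.1 * f q) _ p :=
    (hJ.hasFDerivAt.comp p hasFDerivAt_fst).mul hf.hasFDerivAt
  rw [h.fderiv]
  simp

variable [ProperSpace E]

theorem hasFDerivAt_intervalIntegral_of_contDiff {F : E × ℝ → G} (hF : ContDiff ℝ 1 F)
    (a b : ℝ) (x : E) :
    HasFDerivAt (fun x' => ∫ y in a..b, F (x', y))
      (∫ y in a..b, (fderiv ℝ F (x, y)).comp (ContinuousLinearMap.inl ℝ E ℝ)) x := by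
  have hF' : Continuous fun p : E × ℝ => (fderiv ℝ F p).comp (ContinuousLinearMap.inl ℝ E ℝ) :=
    (hF.continuous_fderiv one_ne_zero).clm_comp continuous_const
  obtain ⟨C, hC⟩ := ((isCompact_closedBall x 1).prod isCompact_uIcc).exists_bound_of_continuousOn
    (hF'.continuousOn (s := Metric.closedBall x 1 ×ˢ uIcc a b))
  refine intervalIntegral.hasFDerivAt_integral_of_dominated_of_fderiv_le (bound := fun _ => C)
    (Metric.ball_mem_nhds x one_pos)
    (Filter.Eventually.of_forall fun x' =>
      (hF.continuous.comp (Continuous.prodMk_right x')).aestronglyMeasurable)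
    ((hF.continuous.comp (Continuous.prodMk_right x)).intervalIntegrable _ _)
    (hF'.comp (Continuous.prodMk_right x)).aestronglyMeasurable
    (Filter.Eventually.of_forall fun t ht x' hx' =>
      hC (x', t) ⟨Metric.ball_subset_closedBall hx', uIoc_subset_uIcc ht⟩)
    intervalIntegrable_const
    (Filter.Eventually.of_forall fun t _ x' _ => ?_)
  exact (hF.differentiable one_ne_zero (x', t)).hasFDerivAt.comp x'
    ((hasFDerivAt_id x').prodMk (hasFDerivAt_const t x'))

theorem fderiv_intervalIntegral_apply_of_contDiff {F : E × ℝ → G} (hF : ContDiff ℝ 1 F)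
    (a b : ℝ) (x v : E) :
    fderiv ℝ (fun x' => ∫ y in a..b, F (x', y)) x v = ∫ y in a..b, fderiv ℝ F (x, y) (v, 0) := by
  rw [(hasFDerivAt_intervalIntegral_of_contDiff hF a b x).fderiv,
    ContinuousLinearMap.intervalIntegral_apply
      ((((hF.continuous_fderiv one_ne_zero).clm_comp continuous_const).comp
        (Continuous.prodMk_right x)).intervalIntegrable _ _)]
  rfl

end Calculus

theorem intervalIntegral_eq_sum_of_eqOn_Ioo {E : Type*} [NormedAddCommGroup E] [NormedSpace ℝ E]
    {n : ℕ} {a : ℕ → ℝ} (ha : ∀ k < n, a k ≤ a (k + 1)) {f : ℝ → E} {g : ℕ → ℝ → E}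
    (hg : ∀ k < n, IntervalIntegrable (g k) volume (a k) (a (k + 1)))
    (hfg : ∀ k < n, EqOn f (g k) (Ioo (a k) (a (k + 1)))) :
    ∫ y in a 0..a n, f y = ∑ k ∈ Finset.range n, ∫ y in a k..a (k + 1), g k y := by
  have hfg' : ∀ k < n, EqOn f (g k) (uIoo (a k) (a (k + 1))) := fun k hk => by
    rw [uIoo_of_le (ha k hk)]
    exact hfg k hk
  rw [← intervalIntegral.sum_integral_adjacent_intervals fun k hk =>
    (hg k hk).congr_uIoo (hfg' k hk).symm]
  exact Finset.sum_congr rfl fun k hk =>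
    intervalIntegral.integral_congr_uIoo (hfg' k (Finset.mem_range.mp hk))

theorem EuclideanSpace.fderiv_apply_single (f : EuclideanSpace ℝ (Fin d) → ℝ)
    (x : EuclideanSpace ℝ (Fin d)) (i : Fin d) :
    fderiv ℝ f x (EuclideanSpace.single i 1) = gradient f x i := by
  rw [← inner_gradient_left, EuclideanSpace.inner_single_right]
  simp

theorem EuclideanSpace.real_inner_eq_sum (v w : EuclideanSpace ℝ (Fin d)) :
    ⟪v, w⟫ = ∑ i, v i * w i := by
  simp [PiLp.inner_apply, mul_comm]

section Layer

variable (c₁ c₂ : ℝ) (η₁ η₂ : EuclideanSpace ℝ (Fin d) → ℝ)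
  (u : EuclideanSpace ℝ (Fin d) × ℝ → EuclideanSpace ℝ (Fin d) × ℝ)

noncomputable def layerJacobian (x : EuclideanSpace ℝ (Fin d)) : ℝ :=
  (c₂ + η₂ x - c₁ - η₁ x) / (c₂ - c₁)

noncomputable def layerFlatDiv : EuclideanSpace ℝ (Fin d) × ℝ → ℝ :=
  flatDiv u (fun p => layerJacobian c₁ c₂ η₁ η₂ p.1) (fun p => c₂ + η₂ p.1 - c₁ - η₁ p.1)
    (fun _ => c₂ - c₁) (fun p => (c₂ - p.2) • gradient η₁ p.1 + (p.2 - c₁) • gradient η₂ p.1)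

/-- `u · 𝒩` for the interface normal `𝒩 = (-∇η, 1)`. -/
noncomputable def normalFlux (η : EuclideanSpace ℝ (Fin d) → ℝ) (x : EuclideanSpace ℝ (Fin d))
    (y : ℝ) : ℝ :=
  (u (x, y)).2 - ⟪(u (x, y)).1, gradient η x⟫

noncomputable def layerPotential (x : EuclideanSpace ℝ (Fin d)) (y : ℝ) : ℝ :=
  ((c₂ - y) * normalFlux u η₁ x y + (y - c₁) * normalFlux u η₂ x y) / (c₂ - c₁)

variable {c₁ c₂ η₁ η₂ u} {x : EuclideanSpace ℝ (Fin d)}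

theorem flatDiv_eq_layerFlatDiv {J δf : EuclideanSpace ℝ (Fin d) × ℝ → ℝ} {Δf : ℝ → ℝ}
    {Bv : EuclideanSpace ℝ (Fin d) × ℝ → EuclideanSpace ℝ (Fin d)} {y : ℝ}
    (hJ : J (x, y) = (c₂ + η₂ x - c₁ - η₁ x) / (c₂ - c₁))
    (hδ : δf (x, y) = c₂ + η₂ x - c₁ - η₁ x) (hΔ : Δf y = c₂ - c₁)
    (hB : Bv (x, y) = (c₂ - y) • gradient η₁ x + (y - c₁) • gradient η₂ x) :
    flatDiv u J δf Δf Bv (x, y) = layerFlatDiv c₁ c₂ η₁ η₂ u (x, y) := by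
  simp only [layerFlatDiv, flatDiv, layerJacobian]
  rw [hJ, hδ, hΔ, hB]

theorem fderiv_layerJacobian_apply (h₁ : DifferentiableAt ℝ η₁ x)
    (h₂ : DifferentiableAt ℝ η₂ x) (v : EuclideanSpace ℝ (Fin d)) :
    fderiv ℝ (layerJacobian c₁ c₂ η₁ η₂) x v = (fderiv ℝ η₂ x v - fderiv ℝ η₁ x v) / (c₂ - c₁) := by
  have h : HasFDerivAt (layerJacobian c₁ c₂ η₁ η₂)
      ((c₂ - c₁)⁻¹ • (fderiv ℝ η₂ x - fderiv ℝ η₁ x)) x := by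
    unfold layerJacobian
    simp only [div_eq_mul_inv]
    exact (((h₂.hasFDerivAt.const_add c₂).sub_const c₁).sub h₁.hasFDerivAt).mul_const _
  rw [h.fderiv]
  simp [div_eq_mul_inv, mul_comm]

theorem hasDerivAt_normalFlux (η : EuclideanSpace ℝ (Fin d) → ℝ) {y : ℝ}
    (hu : DifferentiableAt ℝ u (x, y)) :
    HasDerivAt (normalFlux u η x) (fderiv ℝ (fun q => (u q).2) (x, y) (0, 1)
      - ∑ i, fderiv ℝ (fun q => (u q).1 i) (x, y) (0, 1) * gradient η x i) y := by
  have hu₁ := differentiableAt_euclidean.mp hu.fst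
  unfold normalFlux
  simp_rw [EuclideanSpace.real_inner_eq_sum]
  exact (hasDerivAt_comp_prodMk_right hu.snd).sub
    (HasDerivAt.fun_sum fun i _ => (hasDerivAt_comp_prodMk_right (hu₁ i)).mul_const _)

theorem layerFlatDiv_eq_deriv_add_sum (hc : c₁ ≠ c₂) (hD : c₂ + η₂ x - c₁ - η₁ x ≠ 0)
    (h₁ : DifferentiableAt ℝ η₁ x) (h₂ : DifferentiableAt ℝ η₂ x) {y : ℝ}
    (hu : DifferentiableAt ℝ u (x, y)) :
    layerFlatDiv c₁ c₂ η₁ η₂ u (x, y) = deriv (layerPotential c₁ c₂ η₁ η₂ u x) y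
      + ∑ i, fderiv ℝ (fun p => layerJacobian c₁ c₂ η₁ η₂ p.1 * (u p).1 i) (x, y)
          (EuclideanSpace.single i 1, 0) := by
  have hu₁ := differentiableAt_euclidean.mp hu.fst
  have hJ : DifferentiableAt ℝ (layerJacobian c₁ c₂ η₁ η₂) x := by
    unfold layerJacobian
    fun_prop
  have hφ : HasDerivAt (layerPotential c₁ c₂ η₁ η₂ u x) _ y :=
    ((((hasDerivAt_id y).const_sub c₂).mul (hasDerivAt_normalFlux η₁ hu)).add
      (((hasDerivAt_id y).sub_const c₁).mul (hasDerivAt_normalFlux η₂ hu))).div_const (c₂ - c₁)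
  have hpart : ∀ i, fderiv ℝ (fun p => layerJacobian c₁ c₂ η₁ η₂ p.1 * (u p).1 i) (x, y)
      (EuclideanSpace.single i 1, 0) = layerJacobian c₁ c₂ η₁ η₂ x
        * fderiv ℝ (fun q => (u q).1 i) (x, y) (EuclideanSpace.single i 1, 0)
        + (u (x, y)).1 i * ((gradient η₂ x i - gradient η₁ x i) / (c₂ - c₁)) := fun i => by
    rw [fderiv_comp_fst_mul_apply_inl hJ (hu₁ i), fderiv_layerJacobian_apply h₁ h₂,
      EuclideanSpace.fderiv_apply_single, EuclideanSpace.fderiv_apply_single]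
  rw [hφ.deriv, Finset.sum_congr rfl fun i _ => hpart i]
  simp only [layerFlatDiv, flatDiv, normalFlux, layerJacobian,
    EuclideanSpace.real_inner_eq_sum, PiLp.add_apply, PiLp.smul_apply, smul_eq_mul]
  obtain ⟨A, hA⟩ : ∃ A : Fin d → ℝ,
      ∀ i, fderiv ℝ (fun q => (u q).1 i) (x, y) (EuclideanSpace.single i 1, 0) = A i :=
    ⟨_, fun _ => rfl⟩
  obtain ⟨C, hC⟩ : ∃ C : Fin d → ℝ, ∀ i, fderiv ℝ (fun q => (u q).1 i) (x, y) (0, 1) = C i :=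
    ⟨_, fun _ => rfl⟩
  simp only [hA, hC, id]
  generalize c₂ + η₂ x - c₁ - η₁ x = D at hD ⊢
  generalize (u (x, y)).1 = U
  generalize gradient η₁ x = g
  generalize gradient η₂ x = h
  have hΔ : c₂ - c₁ ≠ 0 := sub_ne_zero.mpr hc.symm
  have hL : ∑ i, (A i - ((c₂ - y) * g i + (y - c₁) * h i) / D * C i)
      = ∑ i, A i - ((c₂ - y) * ∑ i, C i * g i + (y - c₁) * ∑ i, C i * h i) / D := by
    rw [Finset.mul_sum, Finset.mul_sum, ← Finset.sum_add_distrib, Finset.sum_div,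
      ← Finset.sum_sub_distrib]
    exact Finset.sum_congr rfl fun i _ => by ring
  have hR : ∑ i, (D / (c₂ - c₁) * A i + U i * ((h i - g i) / (c₂ - c₁)))
      = D / (c₂ - c₁) * ∑ i, A i + (∑ i, U i * h i - ∑ i, U i * g i) / (c₂ - c₁) := by
    rw [Finset.mul_sum, ← Finset.sum_sub_distrib, Finset.sum_div, ← Finset.sum_add_distrib]
    exact Finset.sum_congr rfl fun i _ => by ring
  rw [hL, hR]
  field_simp
  ring

theorem contDiff_layerPotential (hu : ContDiff ℝ 1 u) (x : EuclideanSpace ℝ (Fin d)) :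
    ContDiff ℝ 1 (layerPotential c₁ c₂ η₁ η₂ u x) := by
  have hslice : ContDiff ℝ 1 fun y => u (x, y) := hu.comp (contDiff_const.prodMk contDiff_id)
  have hflux : ∀ η : EuclideanSpace ℝ (Fin d) → ℝ, ContDiff ℝ 1 (normalFlux u η x) := fun η =>
    hslice.snd.sub (hslice.fst.inner ℝ contDiff_const)
  unfold layerPotential
  fun_prop

theorem contDiff_layerJacobian_mul (h₁ : ContDiff ℝ 1 η₁) (h₂ : ContDiff ℝ 1 η₂)
    (hu : ContDiff ℝ 1 u) (i : Fin d) :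
    ContDiff ℝ 1 fun p : EuclideanSpace ℝ (Fin d) × ℝ =>
      layerJacobian c₁ c₂ η₁ η₂ p.1 * (u p).1 i := by
  have hu₁ := contDiff_euclidean.mp hu.fst i
  unfold layerJacobian
  fun_prop

theorem continuous_layerFlatDiv_prodMk_right (hc : c₁ ≠ c₂) (hD : c₂ + η₂ x - c₁ - η₁ x ≠ 0)
    (h₁ : ContDiff ℝ 1 η₁) (h₂ : ContDiff ℝ 1 η₂) (hu : ContDiff ℝ 1 u) :
    Continuous fun y => layerFlatDiv c₁ c₂ η₁ η₂ u (x, y) := by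
  have hF := contDiff_layerJacobian_mul (c₁ := c₁) (c₂ := c₂) h₁ h₂ hu
  simp only [layerFlatDiv_eq_deriv_add_sum hc hD (h₁.differentiable one_ne_zero x)
    (h₂.differentiable one_ne_zero x) (hu.differentiable one_ne_zero _)]
  exact ((contDiff_layerPotential hu x).continuous_deriv le_rfl).add
    (continuous_finsetSum _ fun i _ => (((hF i).continuous_fderiv one_ne_zero).comp
      (Continuous.prodMk_right x)).clm_apply continuous_const)

theorem integral_layerFlatDiv (hc : c₁ ≠ c₂) (hD : c₂ + η₂ x - c₁ - η₁ x ≠ 0)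
    (h₁ : ContDiff ℝ 1 η₁) (h₂ : ContDiff ℝ 1 η₂) (hu : ContDiff ℝ 1 u) :
    ∫ y in c₁..c₂, layerFlatDiv c₁ c₂ η₁ η₂ u (x, y)
      = normalFlux u η₂ x c₂ - normalFlux u η₁ x c₁
        + ∑ i, fderiv ℝ (fun x' => ∫ y in c₁..c₂, layerJacobian c₁ c₂ η₁ η₂ x' * (u (x', y)).1 i)
            x (EuclideanSpace.single i 1) := by
  have hF := contDiff_layerJacobian_mul (c₁ := c₁) (c₂ := c₂) h₁ h₂ hu
  have hφ := contDiff_layerPotential (c₁ := c₁) (c₂ := c₂) (η₁ := η₁) (η₂ := η₂) hu x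
  have hpart : ∀ i, Continuous fun y => fderiv ℝ
      (fun p => layerJacobian c₁ c₂ η₁ η₂ p.1 * (u p).1 i) (x, y) (EuclideanSpace.single i 1, 0) :=
    fun i => (((hF i).continuous_fderiv one_ne_zero).comp (Continuous.prodMk_right x)).clm_apply
      continuous_const
  have hΔ : c₂ - c₁ ≠ 0 := sub_ne_zero.mpr hc.symm
  have hφ₁ : layerPotential c₁ c₂ η₁ η₂ u x c₁ = normalFlux u η₁ x c₁ := by
    simp [layerPotential, hΔ]
  have hφ₂ : layerPotential c₁ c₂ η₁ η₂ u x c₂ = normalFlux u η₂ x c₂ := by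
    simp [layerPotential, hΔ]
  calc ∫ y in c₁..c₂, layerFlatDiv c₁ c₂ η₁ η₂ u (x, y)
      = ∫ y in c₁..c₂, (deriv (layerPotential c₁ c₂ η₁ η₂ u x) y
          + ∑ i, fderiv ℝ (fun p => layerJacobian c₁ c₂ η₁ η₂ p.1 * (u p).1 i) (x, y)
            (EuclideanSpace.single i 1, 0)) :=
        intervalIntegral.integral_congr fun y _ => layerFlatDiv_eq_deriv_add_sum hc hD
          (h₁.differentiable one_ne_zero x) (h₂.differentiable one_ne_zero x)
          (hu.differentiable one_ne_zero _)
    _ = layerPotential c₁ c₂ η₁ η₂ u x c₂ - layerPotential c₁ c₂ η₁ η₂ u x c₁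
        + ∑ i, ∫ y in c₁..c₂, fderiv ℝ (fun p => layerJacobian c₁ c₂ η₁ η₂ p.1 * (u p).1 i)
            (x, y) (EuclideanSpace.single i 1, 0) := by
      rw [intervalIntegral.integral_add ((hφ.continuous_deriv le_rfl).intervalIntegrable _ _)
          ((continuous_finsetSum _ fun i _ => hpart i).intervalIntegrable _ _),
        intervalIntegral.integral_deriv_eq_sub (fun y _ => hφ.differentiable one_ne_zero y)
          ((hφ.continuous_deriv le_rfl).intervalIntegrable _ _),
        intervalIntegral.integral_finsetSum fun i _ => (hpart i).intervalIntegrable _ _]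
    _ = _ := by
      rw [hφ₁, hφ₂]
      congr 1
      exact Finset.sum_congr rfl fun i _ =>
        (fderiv_intervalIntegral_apply_of_contDiff (hF i) c₁ c₂ x _).symm

end Layer

theorem stmt_19_general (d m : ℕ) (a : ℕ → ℝ) (ha0 : a 0 = 0)
    (hamono : ∀ k < m, a k < a (k + 1)) (η : ℕ → EuclideanSpace ℝ (Fin d) → ℝ)
    (hηC1 : ∀ ℓ ≤ m, ContDiff ℝ 1 (η ℓ))
    (hnondeg : ∀ k < m, ∀ x : EuclideanSpace ℝ (Fin d),
      0 < a (k + 1) + η (k + 1) x - a k - η k x)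
    (u : EuclideanSpace ℝ (Fin d) × ℝ → EuclideanSpace ℝ (Fin d) × ℝ)
    (hu : ContDiff ℝ 1 u) (hbot : ∀ x : EuclideanSpace ℝ (Fin d), u (x, 0) = 0)
    (J δf : EuclideanSpace ℝ (Fin d) × ℝ → ℝ) (Δf : ℝ → ℝ)
    (Bv : EuclideanSpace ℝ (Fin d) × ℝ → EuclideanSpace ℝ (Fin d))
    (hJ : ∀ k < m, ∀ (x : EuclideanSpace ℝ (Fin d)), ∀ y ∈ Set.Ioo (a k) (a (k + 1)),
      J (x, y) = (a (k + 1) + η (k + 1) x - a k - η k x) / (a (k + 1) - a k))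
    (hδ : ∀ k < m, ∀ (x : EuclideanSpace ℝ (Fin d)), ∀ y ∈ Set.Ioo (a k) (a (k + 1)),
      δf (x, y) = a (k + 1) + η (k + 1) x - a k - η k x)
    (hΔ : ∀ k < m, ∀ y ∈ Set.Ioo (a k) (a (k + 1)), Δf y = a (k + 1) - a k)
    (hB : ∀ k < m, ∀ (x : EuclideanSpace ℝ (Fin d)), ∀ y ∈ Set.Ioo (a k) (a (k + 1)),
      Bv (x, y) = (a (k + 1) - y) • gradient (η k) x + (y - a k) • gradient (η (k + 1)) x) :
    ∀ ℓ, 1 ≤ ℓ → ℓ ≤ m → ∀ x : EuclideanSpace ℝ (Fin d),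
      (∫ y in (0 : ℝ)..(a ℓ), flatDiv u J δf Δf Bv (x, y)) =
        ((u (x, a ℓ)).2 - ⟪(u (x, a ℓ)).1, gradient (η ℓ) x⟫) +
          ∑ i, fderiv ℝ
            (fun x' : EuclideanSpace ℝ (Fin d) =>
              ∫ y in (0 : ℝ)..(a ℓ), J (x', y) * (u (x', y)).1 i) x
            (EuclideanSpace.single i 1) := by
  intro ℓ _ hℓm x
  have hm : ∀ k < ℓ, k < m := fun k hk => hk.trans_le hℓm
  have hle : ∀ k < ℓ, a k ≤ a (k + 1) := fun k hk => (hamono k (hm k hk)).le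
  have hη : ∀ k < ℓ, ContDiff ℝ 1 (η k) ∧ ContDiff ℝ 1 (η (k + 1)) := fun k hk =>
    ⟨hηC1 k (hm k hk).le, hηC1 (k + 1) (hm k hk)⟩
  have hdiv : ∫ y in (0 : ℝ)..(a ℓ), flatDiv u J δf Δf Bv (x, y) = ∑ k ∈ Finset.range ℓ,
      ∫ y in a k..a (k + 1), layerFlatDiv (a k) (a (k + 1)) (η k) (η (k + 1)) u (x, y) := by
    rw [← ha0]
    exact intervalIntegral_eq_sum_of_eqOn_Ioo hle (fun k hk =>
      (continuous_layerFlatDiv_prodMk_right (hamono k (hm k hk)).ne (hnondeg k (hm k hk) x).ne'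
        (hη k hk).1 (hη k hk).2 hu).intervalIntegrable _ _) fun k hk y hy =>
      flatDiv_eq_layerFlatDiv (hJ k (hm k hk) x y hy) (hδ k (hm k hk) x y hy)
        (hΔ k (hm k hk) y hy) (hB k (hm k hk) x y hy)
  have hflux : ∀ i, (fun x' => ∫ y in (0 : ℝ)..(a ℓ), J (x', y) * (u (x', y)).1 i)
      = fun x' => ∑ k ∈ Finset.range ℓ, ∫ y in a k..a (k + 1),
          layerJacobian (a k) (a (k + 1)) (η k) (η (k + 1)) x' * (u (x', y)).1 i := fun i =>
    funext fun x' => ha0 ▸ intervalIntegral_eq_sum_of_eqOn_Ioo hle (fun k hk =>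
      ((contDiff_layerJacobian_mul (hη k hk).1 (hη k hk).2 hu i).continuous.comp
        (Continuous.prodMk_right x')).intervalIntegrable _ _) fun k hk y hy => by
      simp only [layerJacobian, hJ k (hm k hk) x' y hy]
  have hlayer (k : ℕ) (hk : k < ℓ) := integral_layerFlatDiv (x := x) (hamono k (hm k hk)).ne
    (hnondeg k (hm k hk) x).ne' (hη k hk).1 (hη k hk).2 hu
  have hflux₀ : normalFlux u (η 0) x (a 0) = 0 := by simp [normalFlux, ha0, hbot]
  rw [hdiv, Finset.sum_congr rfl fun k hk => hlayer k (Finset.mem_range.mp hk),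
    Finset.sum_add_distrib, Finset.sum_range_sub (fun k => normalFlux u (η k) x (a k)), hflux₀,
    sub_zero, Finset.sum_comm]
  congr 1
  refine Finset.sum_congr rfl fun i _ => ?_
  have hdiff (k : ℕ) (hk : k < ℓ) := (hasFDerivAt_intervalIntegral_of_contDiff
    (contDiff_layerJacobian_mul (c₁ := a k) (c₂ := a (k + 1)) (hη k hk).1 (hη k hk).2 hu i)
      (a k) (a (k + 1)) x).differentiableAt
  rw [hflux i, fderiv_fun_sum fun k hk => hdiff k (Finset.mem_range.mp hk), _root_.sum_apply]

/-- **nonlinear divergence compatibility.** For the multilayer flattening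
geometry built from `C¹` interface functions `η₁,…,η_m` satisfying the uniform separation
condition, and `u ∈ H¹` (here `C¹`) vanishing on the bottom boundary,
`∫₀^{a_ℓ} (J𝒜∇)·u dy = u·𝒩_ℓ(·,a_ℓ) + ∇_∥ · ∫₀^{a_ℓ} J 𝒜ᵀ u dy` for each `ℓ`, where
`𝒩_ℓ = (−∇η_ℓ, 1)` and the horizontal part of `J𝒜ᵀu` is `J u_h`. -/
theorem stmt_19 (d m : ℕ) (hm : 1 ≤ m) (a : ℕ → ℝ) (ha0 : a 0 = 0)
    (hamono : ∀ k < m, a k < a (k + 1)) (η : ℕ → EuclideanSpace ℝ (Fin d) → ℝ)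
    (hη0 : η 0 = 0) (hηC1 : ∀ ℓ ≤ m, ContDiff ℝ 1 (η ℓ))
    (hbound : ∀ ℓ, 1 ≤ ℓ → ℓ ≤ m → ∀ (x : EuclideanSpace ℝ (Fin d)) (k : ℕ), k < m →
      |η ℓ x| ≤ (1 / 2) * (a (k + 1) - a k))
    (hnondeg : ∀ k < m, ∀ x : EuclideanSpace ℝ (Fin d),
      0 < a (k + 1) + η (k + 1) x - a k - η k x)
    (u : EuclideanSpace ℝ (Fin d) × ℝ → EuclideanSpace ℝ (Fin d) × ℝ)
    (hu : ContDiff ℝ 1 u) (hbot : ∀ x : EuclideanSpace ℝ (Fin d), u (x, 0) = 0)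
    (J δf : EuclideanSpace ℝ (Fin d) × ℝ → ℝ) (Δf : ℝ → ℝ)
    (Bv : EuclideanSpace ℝ (Fin d) × ℝ → EuclideanSpace ℝ (Fin d))
    (hJ : ∀ k < m, ∀ (x : EuclideanSpace ℝ (Fin d)), ∀ y ∈ Set.Ioo (a k) (a (k + 1)),
      J (x, y) = (a (k + 1) + η (k + 1) x - a k - η k x) / (a (k + 1) - a k))
    (hδ : ∀ k < m, ∀ (x : EuclideanSpace ℝ (Fin d)), ∀ y ∈ Set.Ioo (a k) (a (k + 1)),
      δf (x, y) = a (k + 1) + η (k + 1) x - a k - η k x)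
    (hΔ : ∀ k < m, ∀ y ∈ Set.Ioo (a k) (a (k + 1)), Δf y = a (k + 1) - a k)
    (hB : ∀ k < m, ∀ (x : EuclideanSpace ℝ (Fin d)), ∀ y ∈ Set.Ioo (a k) (a (k + 1)),
      Bv (x, y) = (a (k + 1) - y) • gradient (η k) x + (y - a k) • gradient (η (k + 1)) x) :
    ∀ ℓ, 1 ≤ ℓ → ℓ ≤ m → ∀ x : EuclideanSpace ℝ (Fin d),
      (∫ y in (0 : ℝ)..(a ℓ), flatDiv u J δf Δf Bv (x, y)) =
        ((u (x, a ℓ)).2 - ⟪(u (x, a ℓ)).1, gradient (η ℓ) x⟫) +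
          ∑ i, fderiv ℝ
            (fun x' : EuclideanSpace ℝ (Fin d) =>
              ∫ y in (0 : ℝ)..(a ℓ), J (x', y) * (u (x', y)).1 i) x
            (EuclideanSpace.single i 1) :=
  stmt_19_general d m a ha0 hamono η hηC1 hnondeg u hu hbot J δf Δf Bv hJ hδ hΔ hB
end
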